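/- For the piecewise-linear functions β(x) = 61x/100 and β̃(x) defined on [0,1] by β̃(x) = x for 0 ≤ x ≤ 1/3, β̃(x) = 9x/100 + 91/300 for 1/3 < x ≤ 2/3, and β̃(x) = 63x/100 − 17/300 for 2/3 < x ≤ 1, the integral ∫₀¹ (β̃(x) − β(x))(x − β(x))/β'(x) dx is strictly negative, while ∫₀¹ (β̃(x) − β(x))(x − β̃(x))/β̃'(x) dx is strictly positive (where β' and β̃' denote the piecewise derivatives, defined almost everywhere). -/

import Mathlib

open MeasureTheory Set

noncomputable def sp_beta (x : ℝ) : ℝ := 61 * x / 100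

noncomputable def sp_betat (x : ℝ) : ℝ :=
  if x ≤ 1/3 then x
  else if x ≤ 2/3 then 9 * x / 100 + 91 / 300
  else 63 * x / 100 - 17 / 300

noncomputable def sp_betat' (x : ℝ) : ℝ :=
  if x ≤ 1/3 then 1
  else if x ≤ 2/3 then 9 / 100
  else 63 / 100

/-! On each of the pieces `(0, 1/3]`, `(1/3, 2/3]`, `(2/3, 1]` of `β̃` both integrands are
quadratic polynomials, so both integrals can be computed exactly. -/

theorem integral_add_adjacent_intervals_three {E : Type*} [NormedAddCommGroup E]
    [NormedSpace ℝ E] {μ : Measure ℝ} {f : ℝ → E} {a b c d : ℝ}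
    (hab : IntervalIntegrable f μ a b) (hbc : IntervalIntegrable f μ b c)
    (hcd : IntervalIntegrable f μ c d) :
    (∫ x in a..b, f x ∂μ) + (∫ x in b..c, f x ∂μ) + (∫ x in c..d, f x ∂μ) =
      ∫ x in a..d, f x ∂μ := by
  rw [intervalIntegral.integral_add_adjacent_intervals hab hbc,
    intervalIntegral.integral_add_adjacent_intervals (hab.trans hbc) hcd]

theorem integral_quadratic (a b A B C : ℝ) :
    ∫ x in a..b, (A * x ^ 2 + B * x + C) =
      A * (b ^ 3 - a ^ 3) / 3 + B * (b ^ 2 - a ^ 2) / 2 + C * (b - a) := by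
  have hi : ∀ g : ℝ → ℝ, Continuous g → IntervalIntegrable g volume a b :=
    fun g hg ↦ hg.intervalIntegrable a b
  rw [intervalIntegral.integral_add (hi _ (by fun_prop)) (hi _ (by fun_prop)),
    intervalIntegral.integral_add (hi _ (by fun_prop)) (hi _ (by fun_prop)),
    intervalIntegral.integral_const_mul, intervalIntegral.integral_const_mul, integral_pow,
    integral_id, intervalIntegral.integral_const, smul_eq_mul]
  ring

theorem integral_of_eqOn_quadratic {f : ℝ → ℝ} {a b A B C : ℝ} (hab : a ≤ b)
    (h : EqOn f (fun x ↦ A * x ^ 2 + B * x + C) (Ioc a b)) :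
    IntervalIntegrable f volume a b ∧
      ∫ x in a..b, f x = A * (b ^ 3 - a ^ 3) / 3 + B * (b ^ 2 - a ^ 2) / 2 + C * (b - a) := by
  rw [← uIoc_of_le hab] at h
  refine ⟨(intervalIntegrable_congr h).2 ?_, ?_⟩
  · exact (by fun_prop : Continuous _).intervalIntegrable a b
  · rw [intervalIntegral.integral_congr_ae (ae_of_all _ h), integral_quadratic]

theorem sp_betat_of_le {x : ℝ} (hx : x ≤ 1/3) : sp_betat x = x ∧ sp_betat' x = 1 := by
  simp only [sp_betat, sp_betat', if_pos hx, and_self]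

theorem sp_betat_of_mem_Ioc {x : ℝ} (hx : x ∈ Ioc (1/3 : ℝ) (2/3)) :
    sp_betat x = 9 * x / 100 + 91 / 300 ∧ sp_betat' x = 9 / 100 := by
  simp only [sp_betat, sp_betat', if_neg (not_le.2 hx.1), if_pos hx.2, and_self]

theorem sp_betat_of_gt {x : ℝ} (hx : 2/3 < x) :
    sp_betat x = 63 * x / 100 - 17 / 300 ∧ sp_betat' x = 63 / 100 := by
  have hx' : ¬ x ≤ 1/3 := by linarith
  simp only [sp_betat, sp_betat', if_neg hx', if_neg (not_le.2 hx), and_self]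

theorem integral_pairing_at_sp_beta :
    ∫ x in (0:ℝ)..1, (sp_betat x - sp_beta x) * (x - sp_beta x) / (61 / 100) = -13 / 32940 := by
  set f : ℝ → ℝ := fun x ↦ (sp_betat x - sp_beta x) * (x - sp_beta x) / (61 / 100) with hf
  obtain ⟨hi₁, he₁⟩ := integral_of_eqOn_quadratic (f := f)
    (A := 1521 / 6100) (B := 0) (C := 0)
    (by norm_num : (0:ℝ) ≤ 1/3) fun x hx ↦ by
      simp only [hf, (sp_betat_of_le hx.2).1, sp_beta]; ring
  obtain ⟨hi₂, he₂⟩ := integral_of_eqOn_quadratic (f := f)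
    (A := -6084 / 18300) (B := 3549 / 18300) (C := 0)
    (by norm_num : (1/3:ℝ) ≤ 2/3) fun x hx ↦ by
      simp only [hf, (sp_betat_of_mem_Ioc hx).1, sp_beta]; ring
  obtain ⟨hi₃, he₃⟩ := integral_of_eqOn_quadratic (f := f)
    (A := 234 / 18300) (B := -663 / 18300) (C := 0)
    (by norm_num : (2/3:ℝ) ≤ 1) fun x hx ↦ by
      simp only [hf, (sp_betat_of_gt hx.1).1, sp_beta]; ring
  rw [← integral_add_adjacent_intervals_three hi₁ hi₂ hi₃, he₁, he₂, he₃]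
  norm_num

theorem integral_pairing_at_sp_betat :
    ∫ x in (0:ℝ)..1, (sp_betat x - sp_beta x) * (x - sp_betat x) / sp_betat' x = 31 / 72900 := by
  set f : ℝ → ℝ := fun x ↦ (sp_betat x - sp_beta x) * (x - sp_betat x) / sp_betat' x with hf
  obtain ⟨hi₁, he₁⟩ := integral_of_eqOn_quadratic (f := f)
    (A := 0) (B := 0) (C := 0)
    (by norm_num : (0:ℝ) ≤ 1/3) fun x hx ↦ by
      simp only [hf, sp_betat_of_le hx.2, sp_beta]; ring
  obtain ⟨hi₂, he₂⟩ := integral_of_eqOn_quadratic (f := f)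
    (A := -42588 / 8100) (B := 39039 / 8100) (C := -8281 / 8100)
    (by norm_num : (1/3:ℝ) ≤ 2/3) fun x hx ↦ by
      simp only [hf, sp_betat_of_mem_Ioc hx, sp_beta]; ring
  obtain ⟨hi₃, he₃⟩ := integral_of_eqOn_quadratic (f := f)
    (A := 666 / 56700) (B := -1785 / 56700) (C := -289 / 56700)
    (by norm_num : (2/3:ℝ) ≤ 1) fun x hx ↦ by
      simp only [hf, sp_betat_of_gt hx.1, sp_beta]; ring
  rw [← integral_add_adjacent_intervals_three hi₁ hi₂ hi₃, he₁, he₂, he₃]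
  norm_num

theorem second_price_not_quasimonotone :
    (∫ x in (0:ℝ)..1, (sp_betat x - sp_beta x) * (x - sp_beta x) / (61 / 100)) < 0 ∧
    0 < ∫ x in (0:ℝ)..1, (sp_betat x - sp_beta x) * (x - sp_betat x) / sp_betat' x := by
  rw [integral_pairing_at_sp_beta, integral_pairing_at_sp_betat]
  norm_num
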